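/- Let (X, d) be a metric space, let {B_i}_{i∈I} be a cover of X by pairwise disjoint nonempty clopen subsets, let p_i ∈ B_i for each i, let e_i be a metric on B_i generating the subspace topology of B_i, and let h be a metric on the set P = {p_i : i ∈ I} generating the discrete topology on P. Define D : X × X → [0,∞) by D(x,y) = e_i(x,y) if x, y ∈ B_i, and D(x,y) = e_i(x, p_i) + h(p_i, p_j) + e_j(p_j, y) if x ∈ B_i, y ∈ B_j with i ≠ j. Then D is a metric on X generating the topology of X, and D restricted to B_i × B_i equals e_i for every i. Moreover, if ε > 0 is such that for every i the diameter of B_i with respect to d is at most ε and the diameter of B_i with respect to e_i is at most ε, then sup_{x,y∈X} |D(x,y) − d(x,y)| ≤ 4ε + sup_{i,j∈I} |d(p_i, p_j) − h(p_i, p_j)|. -/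

import Mathlib

/-! Between different blocks the amalgam factors through the base points,
`D x y = D x (p i) + h (p i) (p j) + D (p j) y`, so each case of the triangle inequality reduces
to the triangle inequality of a single `e i` or of `h`. Discreteness of `h` gives every `p i` an
`h`-distance `r > 0` to all other base points, so the `D`-balls of radius `< r` around a point
of `B i` are `e i`-balls; since `B i` is open, `D` and `d` then have the same neighbourhoods.
For the estimate, `D x y` and `d x y` both lie within `2ε` of `h (p i) (p j)` resp.
`d (p i) (p j)`. -/

open Set
open scoped ENNReal

/-- The space `Met(X)` of metrics generating the topology of `X`. -/
def MetricCompat (X : Type*) [t : TopologicalSpace X] : Type _ :=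
  { m : MetricSpace X // m.toUniformSpace.toTopologicalSpace = t }

namespace MetricCompat

variable {X : Type*} [TopologicalSpace X]

/-- The distance function of an element of `Met(X)`. -/
noncomputable def dist (d : MetricCompat X) (x y : X) : ℝ := d.1.dist x y

/-- The supremum distance `D_X`, valued in `[0,∞]`. -/
noncomputable def supDist (d e : MetricCompat X) : ℝ≥0∞ :=
  ⨆ p : X × X, ENNReal.ofReal |d.dist p.1 p.2 - e.dist p.1 p.2|

/-- The topology on `Met(X)` induced by the open balls of `D_X`. -/
noncomputable instance : TopologicalSpace (MetricCompat X) :=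
  TopologicalSpace.generateFrom
    { U | ∃ (d : MetricCompat X) (r : ℝ≥0∞), 0 < r ∧ U = { e | supDist d e < r } }

end MetricCompat

/-- A space is strongly `0`-dimensional if disjoint closed sets are separated by a clopen set. -/
def StronglyZeroDim (X : Type*) [TopologicalSpace X] : Prop :=
  ∀ A B : Set X, IsClosed A → IsClosed B → Disjoint A B →
    ∃ V : Set X, IsClopen V ∧ A ⊆ V ∧ Disjoint V B

open Function Topology

namespace MetricCompat

variable {Y : Type*} [TopologicalSpace Y] (m : MetricCompat Y)

theorem dist_nonneg (a b : Y) : 0 ≤ m.dist a b :=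
  @_root_.dist_nonneg _ m.1.toPseudoMetricSpace a b

theorem dist_self (a : Y) : m.dist a a = 0 :=
  m.1.dist_self a

theorem dist_comm (a b : Y) : m.dist a b = m.dist b a :=
  m.1.dist_comm a b

theorem dist_triangle (a b c : Y) : m.dist a c ≤ m.dist a b + m.dist b c :=
  m.1.dist_triangle a b c

theorem eq_of_dist_eq_zero {a b : Y} : m.dist a b = 0 → a = b :=
  m.1.eq_of_dist_eq_zero

theorem mem_nhds_iff {s : Set Y} {x : Y} :
    s ∈ 𝓝 x ↔ ∃ ε > 0, ∀ y, m.dist x y < ε → y ∈ s := by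
  obtain ⟨m, rfl⟩ := m
  let := m
  simp only [Metric.mem_nhds_iff, subset_def, Metric.mem_ball, _root_.dist_comm _ x]
  rfl

end MetricCompat

theorem exists_pos_forall_le_dist_of_discreteTopology {Z : Type*} [MetricSpace Z]
    [DiscreteTopology Z] (y : Z) : ∃ r > 0, ∀ z, z ≠ y → r ≤ dist y z := by
  obtain ⟨r, hr, hball⟩ := Metric.isOpen_singleton_iff.1 (isOpen_discrete {y})
  exact ⟨r, hr, fun z hz => le_of_not_gt fun hlt => hz (hball z (by rwa [dist_comm]))⟩

theorem injective_of_pairwise_disjoint_of_mem {X I : Type*} {B : I → Set X}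
    (hBdisj : Pairwise (Disjoint on B)) {p : I → X} (hp : ∀ i, p i ∈ B i) : Injective p :=
  fun i j hij => hBdisj.eq (not_disjoint_iff.2 ⟨p i, hp i, hij ▸ hp j⟩)

section Amalgam

variable {X I : Type*} [TopologicalSpace X] {B : I → Set X} {p : I → X} {hp : ∀ i, p i ∈ B i}
  {e : ∀ i, MetricCompat (B i)} {h : MetricSpace (range p)} {D : X → X → ℝ}

variable (B p hp e h D) in
structure IsAmalgam : Prop where
  eq_of_mem : ∀ (i : I) (x y : X) (hx : x ∈ B i) (hy : y ∈ B i),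
    D x y = (e i).dist ⟨x, hx⟩ ⟨y, hy⟩
  eq_of_ne : ∀ (i j : I), i ≠ j → ∀ (x y : X) (hx : x ∈ B i) (hy : y ∈ B j),
    D x y = (e i).dist ⟨x, hx⟩ ⟨p i, hp i⟩
      + h.dist ⟨p i, mem_range_self i⟩ ⟨p j, mem_range_self j⟩
      + (e j).dist ⟨p j, hp j⟩ ⟨y, hy⟩

namespace IsAmalgam

variable {i j : I} {x y z : X}

theorem nonneg_of_mem (hD : IsAmalgam B p hp e h D) (hx : x ∈ B i) (hy : y ∈ B i) :
    0 ≤ D x y :=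
  hD.eq_of_mem i x y hx hy ▸ (e i).dist_nonneg _ _

theorem triangle_of_mem (hD : IsAmalgam B p hp e h D) (hx : x ∈ B i) (hy : y ∈ B i)
    (hz : z ∈ B i) : D x z ≤ D x y + D y z := by
  rw [hD.eq_of_mem i x z hx hz, hD.eq_of_mem i x y hx hy, hD.eq_of_mem i y z hy hz]
  exact (e i).dist_triangle _ _ _

theorem eq_add_add (hD : IsAmalgam B p hp e h D) (hij : i ≠ j) (hx : x ∈ B i) (hy : y ∈ B j) :
    D x y = D x (p i) + h.dist ⟨p i, mem_range_self i⟩ ⟨p j, mem_range_self j⟩ + D (p j) y := by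
  rw [hD.eq_of_ne i j hij x y hx hy, hD.eq_of_mem i x (p i) hx (hp i),
    hD.eq_of_mem j (p j) y (hp j) hy]

theorem baseDist_le (hD : IsAmalgam B p hp e h D) (hij : i ≠ j) (hx : x ∈ B i) (hy : y ∈ B j) :
    h.dist ⟨p i, mem_range_self i⟩ ⟨p j, mem_range_self j⟩ ≤ D x y := by
  rw [hD.eq_add_add hij hx hy]
  linarith [hD.nonneg_of_mem hx (hp i), hD.nonneg_of_mem (hp j) hy]

theorem dist_self (hD : IsAmalgam B p hp e h D) (hBcover : ⋃ i, B i = univ) (x : X) :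
    D x x = 0 := by
  obtain ⟨i, hx⟩ := iUnion_eq_univ_iff.1 hBcover x
  rw [hD.eq_of_mem i x x hx hx, (e i).dist_self]

theorem comm (hD : IsAmalgam B p hp e h D) (hBcover : ⋃ i, B i = univ) (x y : X) :
    D x y = D y x := by
  obtain ⟨i, hx⟩ := iUnion_eq_univ_iff.1 hBcover x
  obtain ⟨j, hy⟩ := iUnion_eq_univ_iff.1 hBcover y
  rcases eq_or_ne i j with rfl | hij
  · rw [hD.eq_of_mem i x y hx hy, hD.eq_of_mem i y x hy hx, (e i).dist_comm]
  · rw [hD.eq_of_ne i j hij x y hx hy, hD.eq_of_ne j i hij.symm y x hy hx, (e i).dist_comm,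
      (e j).dist_comm, h.dist_comm]
    ring

theorem triangle (hD : IsAmalgam B p hp e h D) (hBcover : ⋃ i, B i = univ) (x y z : X) :
    D x z ≤ D x y + D y z := by
  obtain ⟨i, hx⟩ := iUnion_eq_univ_iff.1 hBcover x
  obtain ⟨j, hy⟩ := iUnion_eq_univ_iff.1 hBcover y
  obtain ⟨k, hz⟩ := iUnion_eq_univ_iff.1 hBcover z
  rcases eq_or_ne i j with rfl | hij
  · rcases eq_or_ne i k with rfl | hik
    · exact hD.triangle_of_mem hx hy hz
    · rw [hD.eq_add_add hik hx hz, hD.eq_add_add hik hy hz]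
      linarith [hD.triangle_of_mem hx hy (hp i)]
  rcases eq_or_ne j k with rfl | hjk
  · rw [hD.eq_add_add hij hx hz, hD.eq_add_add hij hx hy]
    linarith [hD.triangle_of_mem (hp j) hy hz]
  rcases eq_or_ne i k with rfl | hik
  · rw [hD.eq_add_add hij hx hy, hD.eq_add_add hjk hy hz]
    linarith [hD.triangle_of_mem hx (hp i) hz, hD.nonneg_of_mem (hp j) hy,
      hD.nonneg_of_mem hy (hp j), @_root_.dist_nonneg _ h.toPseudoMetricSpace
        ⟨p i, mem_range_self i⟩ ⟨p j, mem_range_self j⟩,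
      @_root_.dist_nonneg _ h.toPseudoMetricSpace ⟨p j, mem_range_self j⟩ ⟨p i, mem_range_self i⟩]
  · rw [hD.eq_add_add hik hx hz, hD.eq_add_add hij hx hy, hD.eq_add_add hjk hy hz]
    linarith [h.dist_triangle ⟨p i, mem_range_self i⟩ ⟨p j, mem_range_self j⟩
      ⟨p k, mem_range_self k⟩, hD.nonneg_of_mem (hp j) hy, hD.nonneg_of_mem hy (hp j)]

theorem eq_of_eq_zero (hD : IsAmalgam B p hp e h D) (hBdisj : Pairwise (Disjoint on B))
    (hBcover : ⋃ i, B i = univ) (x y : X) (hxy : D x y = 0) : x = y := by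
  obtain ⟨i, hx⟩ := iUnion_eq_univ_iff.1 hBcover x
  obtain ⟨j, hy⟩ := iUnion_eq_univ_iff.1 hBcover y
  rcases eq_or_ne i j with rfl | hij
  · rw [hD.eq_of_mem i x y hx hy] at hxy
    exact congrArg Subtype.val ((e i).eq_of_dist_eq_zero hxy)
  · have hpij : (⟨p i, mem_range_self i⟩ : range p) ≠ ⟨p j, mem_range_self j⟩ :=
      Subtype.coe_ne_coe.1 ((injective_of_pairwise_disjoint_of_mem hBdisj hp).ne hij)
    linarith [(@dist_pos _ h _ _).2 hpij, hD.baseDist_le hij hx hy]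

theorem exists_pos_forall_lt_mem (hD : IsAmalgam B p hp e h D) (hBdisj : Pairwise (Disjoint on B))
    (hBcover : ⋃ i, B i = univ) (hdisc : h.toUniformSpace.toTopologicalSpace = ⊥)
    (hx : x ∈ B i) : ∃ r > 0, ∀ y, D x y < r → y ∈ B i := by
  obtain ⟨r, hr, hsep⟩ := @exists_pos_forall_le_dist_of_discreteTopology _ h
    (@DiscreteTopology.mk _ h.toUniformSpace.toTopologicalSpace hdisc) ⟨p i, mem_range_self i⟩
  refine ⟨r, hr, fun y hy => ?_⟩
  obtain ⟨j, hyj⟩ := iUnion_eq_univ_iff.1 hBcover y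
  rcases eq_or_ne i j with rfl | hij
  · exact hyj
  · have hpji : (⟨p j, mem_range_self j⟩ : range p) ≠ ⟨p i, mem_range_self i⟩ :=
      Subtype.coe_ne_coe.1 ((injective_of_pairwise_disjoint_of_mem hBdisj hp).ne hij.symm)
    exact absurd hy ((hsep _ hpji).trans (hD.baseDist_le hij hx hyj)).not_gt

theorem mem_nhds_iff (hD : IsAmalgam B p hp e h D) (hBdisj : Pairwise (Disjoint on B))
    (hBcover : ⋃ i, B i = univ) (hBopen : ∀ i, IsOpen (B i))
    (hdisc : h.toUniformSpace.toTopologicalSpace = ⊥) {s : Set X} :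
    s ∈ 𝓝 x ↔ ∃ ε > 0, ∀ y, D x y < ε → y ∈ s := by
  obtain ⟨i, hx⟩ := iUnion_eq_univ_iff.1 hBcover x
  obtain ⟨r, hr, hball⟩ := hD.exists_pos_forall_lt_mem hBdisj hBcover hdisc hx
  rw [← (hBopen i).nhdsWithin_eq hx, ← preimage_coe_mem_nhds_subtype (a := ⟨x, hx⟩),
    (e i).mem_nhds_iff]
  constructor
  · rintro ⟨ε, hε, hsub⟩
    refine ⟨min ε r, lt_min hε hr, fun y hy => ?_⟩
    have hyB := hball y (hy.trans_le (min_le_right _ _))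
    rw [hD.eq_of_mem i x y hx hyB] at hy
    exact hsub ⟨y, hyB⟩ (hy.trans_le (min_le_left _ _))
  · rintro ⟨ε, hε, hsub⟩
    refine ⟨ε, hε, fun y hy => hsub y ?_⟩
    rwa [hD.eq_of_mem i x y hx y.2]

theorem isOpen_iff (hD : IsAmalgam B p hp e h D) (hBdisj : Pairwise (Disjoint on B))
    (hBcover : ⋃ i, B i = univ) (hBopen : ∀ i, IsOpen (B i))
    (hdisc : h.toUniformSpace.toTopologicalSpace = ⊥) (s : Set X) :
    IsOpen s ↔ ∀ x ∈ s, ∃ ε > 0, ∀ y, D x y < ε → y ∈ s :=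
  isOpen_iff_mem_nhds.trans <|
    forall₂_congr fun _ _ => hD.mem_nhds_iff hBdisj hBcover hBopen hdisc

end IsAmalgam

end Amalgam

section Estimate

variable {X I : Type*} [PseudoMetricSpace X] {B : I → Set X} {p : I → X} {hp : ∀ i, p i ∈ B i}
  {e : ∀ i, MetricCompat (B i)} {h : MetricSpace (range p)} {D : X → X → ℝ} {ε : ℝ}

theorem IsAmalgam.abs_sub_dist_le (hD : IsAmalgam B p hp e h D)
    (hdiam : ∀ i, ∀ x ∈ B i, ∀ y ∈ B i, dist x y ≤ ε)
    (hediam : ∀ (i : I) (x y : B i), (e i).dist x y ≤ ε) {i j : I} {x y : X}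
    (hx : x ∈ B i) (hy : y ∈ B j) :
    |D x y - dist x y| ≤
      4 * ε + |dist (p i) (p j) - h.dist ⟨p i, mem_range_self i⟩ ⟨p j, mem_range_self j⟩| := by
  have hDle : ∀ k, ∀ x ∈ B k, ∀ y ∈ B k, D x y ≤ ε := fun k x hx y hy =>
    hD.eq_of_mem k x y hx hy ▸ hediam k _ _
  rcases eq_or_ne i j with rfl | hij
  · have hxy : |D x y - dist x y| ≤ ε := abs_sub_le_of_nonneg_of_le (hD.nonneg_of_mem hx hy)
      (hDle i x hx y hy) dist_nonneg (hdiam i x hx y hy)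
    have hε : 0 ≤ ε := (abs_nonneg _).trans hxy
    exact hxy.trans (le_add_of_le_of_nonneg (by linarith) (abs_nonneg _))
  · have hpxy : |dist x y - dist (p i) (p j)| ≤ 2 * ε := by
      have := dist_dist_dist_le x y (p i) (p j)
      rw [Real.dist_eq] at this
      linarith [hdiam i x hx (p i) (hp i), hdiam j y hy (p j) (hp j)]
    rw [hD.eq_add_add hij hx hy, abs_le]
    have := abs_le.1 hpxy
    constructor <;> linarith [hD.nonneg_of_mem hx (hp i), hD.nonneg_of_mem (hp j) hy,
      hDle i x hx (p i) (hp i), hDle j (p j) (hp j) y hy,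
      neg_abs_le (dist (p i) (p j) - h.dist ⟨p i, mem_range_self i⟩ ⟨p j, mem_range_self j⟩),
      le_abs_self (dist (p i) (p j) - h.dist ⟨p i, mem_range_self i⟩ ⟨p j, mem_range_self j⟩)]

theorem IsAmalgam.iSup_ofReal_abs_sub_dist_le (hD : IsAmalgam B p hp e h D)
    (hBcover : ⋃ i, B i = univ) (hε : 0 ≤ ε) (hdiam : ∀ i, ∀ x ∈ B i, ∀ y ∈ B i, dist x y ≤ ε)
    (hediam : ∀ (i : I) (x y : B i), (e i).dist x y ≤ ε) :
    (⨆ q : X × X, ENNReal.ofReal |D q.1 q.2 - dist q.1 q.2|) ≤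
      ENNReal.ofReal (4 * ε) + ⨆ (i : I) (j : I), ENNReal.ofReal
        |dist (p i) (p j) - h.dist ⟨p i, mem_range_self i⟩ ⟨p j, mem_range_self j⟩| := by
  refine iSup_le fun ⟨x, y⟩ => ?_
  obtain ⟨i, hx⟩ := iUnion_eq_univ_iff.1 hBcover x
  obtain ⟨j, hy⟩ := iUnion_eq_univ_iff.1 hBcover y
  calc ENNReal.ofReal |D x y - dist x y|
      ≤ ENNReal.ofReal (4 * ε) + ENNReal.ofReal
          |dist (p i) (p j) - h.dist ⟨p i, mem_range_self i⟩ ⟨p j, mem_range_self j⟩| := by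
        rw [← ENNReal.ofReal_add (by positivity) (abs_nonneg _)]
        exact ENNReal.ofReal_le_ofReal (hD.abs_sub_dist_le hdiam hediam hx hy)
    _ ≤ _ := by
        gcongr
        exact le_iSup₂ (f := fun i j => ENNReal.ofReal
          |dist (p i) (p j) - h.dist ⟨p i, mem_range_self i⟩ ⟨p j, mem_range_self j⟩|) i j

end Estimate

theorem amalgamation_of_metrics_general
    {X : Type*} [MetricSpace X] {I : Type*}
    (B : I → Set X) (hBcover : ⋃ i, B i = Set.univ)
    (hBdisj : Pairwise (Function.onFun Disjoint B))
    (hBclopen : ∀ i, IsClopen (B i))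
    (p : I → X) (hp : ∀ i, p i ∈ B i)
    (e : ∀ i, MetricCompat (B i))
    (h : MetricSpace (Set.range p))
    (hdisc : h.toUniformSpace.toTopologicalSpace = ⊥)
    (D : X → X → ℝ)
    (hD1 : ∀ (i : I) (x y : X) (hx : x ∈ B i) (hy : y ∈ B i),
      D x y = (e i).dist ⟨x, hx⟩ ⟨y, hy⟩)
    (hD2 : ∀ (i j : I), i ≠ j → ∀ (x y : X) (hx : x ∈ B i) (hy : y ∈ B j),
      D x y = (e i).dist ⟨x, hx⟩ ⟨p i, hp i⟩
        + h.dist ⟨p i, Set.mem_range_self i⟩ ⟨p j, Set.mem_range_self j⟩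
        + (e j).dist ⟨p j, hp j⟩ ⟨y, hy⟩) :
    (∃ m : MetricCompat X, ∀ x y : X, m.dist x y = D x y) ∧
    (∀ (i : I) (x y : X) (hx : x ∈ B i) (hy : y ∈ B i),
      D x y = (e i).dist ⟨x, hx⟩ ⟨y, hy⟩) ∧
    (∀ ε : ℝ, 0 < ε →
      (∀ i : I, ∀ x ∈ B i, ∀ y ∈ B i, dist x y ≤ ε) →
      (∀ (i : I) (x y : B i), (e i).dist x y ≤ ε) →
      (⨆ q : X × X, ENNReal.ofReal |D q.1 q.2 - dist q.1 q.2|) ≤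
        ENNReal.ofReal (4 * ε) +
          ⨆ (i : I) (j : I), ENNReal.ofReal
            |dist (p i) (p j) -
              h.dist ⟨p i, Set.mem_range_self i⟩ ⟨p j, Set.mem_range_self j⟩|) := by
  have hD : IsAmalgam B p hp e h D := ⟨hD1, hD2⟩
  have hBopen i : IsOpen (B i) := (hBclopen i).isOpen
  refine ⟨⟨⟨.ofDistTopology D (hD.dist_self hBcover) (hD.comm hBcover) (hD.triangle hBcover)
    (hD.isOpen_iff hBdisj hBcover hBopen hdisc) (hD.eq_of_eq_zero hBdisj hBcover), rfl⟩,
    fun _ _ => rfl⟩, hD1, fun ε hε => ?_⟩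
  exact hD.iSup_ofReal_abs_sub_dist_le hBcover hε.le

/-- Proposition 2.1 (amalgamation of metrics): given a cover of a metric space `(X, d)` by
pairwise disjoint nonempty clopen sets `B i`, points `p i ∈ B i`, metrics `e i` generating the
subspace topology of `B i`, and a metric `h` on `P = {p i}` generating the discrete topology,
the amalgam `D` is a metric generating the topology of `X` which restricts to `e i` on each
`B i`, and if each `B i` has `d`-diameter and `e i`-diameter at most `ε`, then
`D_X(D, d) ≤ 4ε + D_P(d|_P, h)`. -/
theorem amalgamation_of_metrics
    {X : Type*} [MetricSpace X] {I : Type*}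
    (B : I → Set X) (hBcover : ⋃ i, B i = Set.univ)
    (hBdisj : Pairwise (Function.onFun Disjoint B))
    (hBne : ∀ i, (B i).Nonempty)
    (hBclopen : ∀ i, IsClopen (B i))
    (p : I → X) (hp : ∀ i, p i ∈ B i)
    (e : ∀ i, MetricCompat (B i))
    (h : MetricSpace (Set.range p))
    (hdisc : h.toUniformSpace.toTopologicalSpace = ⊥)
    (D : X → X → ℝ)
    (hD1 : ∀ (i : I) (x y : X) (hx : x ∈ B i) (hy : y ∈ B i),
      D x y = (e i).dist ⟨x, hx⟩ ⟨y, hy⟩)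
    (hD2 : ∀ (i j : I), i ≠ j → ∀ (x y : X) (hx : x ∈ B i) (hy : y ∈ B j),
      D x y = (e i).dist ⟨x, hx⟩ ⟨p i, hp i⟩
        + h.dist ⟨p i, Set.mem_range_self i⟩ ⟨p j, Set.mem_range_self j⟩
        + (e j).dist ⟨p j, hp j⟩ ⟨y, hy⟩) :
    (∃ m : MetricCompat X, ∀ x y : X, m.dist x y = D x y) ∧
    (∀ (i : I) (x y : X) (hx : x ∈ B i) (hy : y ∈ B i),
      D x y = (e i).dist ⟨x, hx⟩ ⟨y, hy⟩) ∧
    (∀ ε : ℝ, 0 < ε →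
      (∀ i : I, ∀ x ∈ B i, ∀ y ∈ B i, dist x y ≤ ε) →
      (∀ (i : I) (x y : B i), (e i).dist x y ≤ ε) →
      (⨆ q : X × X, ENNReal.ofReal |D q.1 q.2 - dist q.1 q.2|) ≤
        ENNReal.ofReal (4 * ε) +
          ⨆ (i : I) (j : I), ENNReal.ofReal
            |dist (p i) (p j) -
              h.dist ⟨p i, Set.mem_range_self i⟩ ⟨p j, Set.mem_range_self j⟩|) :=
  amalgamation_of_metrics_general B hBcover hBdisj hBclopen p hp e h hdisc D hD1 hD2
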